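/- Weak greedy convergence rate: Let H be a Hilbert space with dictionary D (unit vectors with dense span), ρ ∈ (0,1], and f ∈ H with f = ∑_l c_l e_{q_l} for dictionary elements e_{q_l}, M = ∑_l |c_l| < ∞. If at each step k the parameter q_k is chosen so that |⟨f, E_k^{q_k}⟩|² ≥ ρ² sup_q |⟨f, E_k^q⟩|² (where E_k^q denotes the Gram–Schmidt orthonormalization of the chosen kernels with candidate q at step k), then the n-th remainder g_n = f − ∑_{k=1}^{n} ⟨f, E_k⟩E_k satisfies ‖g_n‖ ≤ M/(ρ√n). -/

import Mathlib

/-!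
Write `g_k` for the `k`-th remainder and `d_k = |⟨E_k, f⟩|`. As `g_k ⟂ E_0, …, E_{k-1}`, we have
`‖g_k‖² = ⟨g_k, f⟩ = ∑ c_l ⟨g_k, e_{q_l}⟩`, and `|⟨g_k, e_q⟩| ≤ |⟨E_k^q, f⟩| ≤ d_k / ρ` by weak
selection; hence `‖g_k‖² ≤ (M / ρ) d_k`. Combined with `‖g_{k+1}‖² = ‖g_k‖² - d_k²`, the sequence
`a_k = ‖g_k‖²` satisfies `a_k² ≤ (M / ρ)² (a_k - a_{k+1})`, which forces `a_n ≤ (M / ρ)² / (n + 1)`.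
-/

open scoped InnerProductSpace

section Remainder

variable {𝕜 H : Type*} [RCLike 𝕜] [NormedAddCommGroup H] [InnerProductSpace 𝕜 H]

def remainder (𝕜 : Type*) [RCLike 𝕜] [InnerProductSpace 𝕜 H] (E : ℕ → H) (k : ℕ) (x : H) : H :=
  x - ∑ i ∈ Finset.range k, ⟪E i, x⟫_𝕜 • E i

variable {E : ℕ → H} (hE : Orthonormal 𝕜 E)
include hE

theorem inner_remainder_of_lt {j k : ℕ} (hjk : j < k) (x : H) :
    ⟪E j, remainder 𝕜 E k x⟫_𝕜 = 0 := by
  rw [remainder, inner_sub_right, hE.inner_right_sum _ (Finset.mem_range.2 hjk), sub_self]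

theorem inner_remainder_left (k : ℕ) (x y : H) :
    ⟪remainder 𝕜 E k x, y⟫_𝕜 = ⟪remainder 𝕜 E k x, remainder 𝕜 E k y⟫_𝕜 := by
  have hperp (i : ℕ) (hi : i ∈ Finset.range k) : ⟪remainder 𝕜 E k x, E i⟫_𝕜 = 0 :=
    inner_eq_zero_symm.1 (inner_remainder_of_lt hE (Finset.mem_range.1 hi) x)
  change _ = ⟪_, y - ∑ i ∈ Finset.range k, ⟪E i, y⟫_𝕜 • E i⟫_𝕜
  rw [inner_sub_right, inner_sum,
    Finset.sum_eq_zero fun i hi => by rw [inner_smul_right, hperp i hi, mul_zero], sub_zero]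

theorem norm_sq_remainder (k : ℕ) (x : H) :
    ‖remainder 𝕜 E k x‖ ^ 2 = ‖⟪remainder 𝕜 E k x, x⟫_𝕜‖ := by
  rw [inner_remainder_left hE, inner_self_eq_norm_sq_to_K, norm_pow, RCLike.norm_coe_norm]

theorem norm_remainder_le (k : ℕ) (x : H) : ‖remainder 𝕜 E k x‖ ≤ ‖x‖ := by
  have h : ‖remainder 𝕜 E k x‖ ^ 2 ≤ ‖remainder 𝕜 E k x‖ * ‖x‖ :=
    norm_sq_remainder hE k x ▸ norm_inner_le_norm _ _
  nlinarith [norm_nonneg (remainder 𝕜 E k x), norm_nonneg x]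

omit hE in
theorem remainder_succ (k : ℕ) (x : H) :
    remainder 𝕜 E (k + 1) x = remainder 𝕜 E k x - ⟪E k, x⟫_𝕜 • E k := by
  rw [remainder, remainder, Finset.sum_range_succ, sub_add_eq_sub_sub]

theorem norm_sq_remainder_succ (k : ℕ) (x : H) :
    ‖remainder 𝕜 E (k + 1) x‖ ^ 2 = ‖remainder 𝕜 E k x‖ ^ 2 - ‖⟪E k, x⟫_𝕜‖ ^ 2 := by
  have hperp : ⟪remainder 𝕜 E (k + 1) x, ⟪E k, x⟫_𝕜 • E k⟫_𝕜 = 0 := by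
    rw [inner_smul_right, inner_eq_zero_symm.1 (inner_remainder_of_lt hE k.lt_succ_self x),
      mul_zero]
  have h := norm_add_sq_eq_norm_sq_add_norm_sq_of_inner_eq_zero _ _ hperp
  rw [remainder_succ, sub_add_cancel, norm_smul, hE.1 k, mul_one] at h
  rw [remainder_succ]
  nlinarith [h]

theorem norm_inner_remainder_le [NormedSpace ℝ H] [IsScalarTower ℝ 𝕜 H] (k : ℕ) (x y : H) :
    ‖⟪remainder 𝕜 E k x, y⟫_𝕜‖ ≤
      ‖y‖ * ‖⟪‖remainder 𝕜 E k y‖⁻¹ • remainder 𝕜 E k y, x⟫_𝕜‖ := by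
  set r := remainder 𝕜 E k y
  have hsymm : ‖⟪remainder 𝕜 E k x, y⟫_𝕜‖ = ‖⟪r, x⟫_𝕜‖ := by
    rw [inner_remainder_left hE, norm_inner_symm, ← inner_remainder_left hE]
  rw [hsymm, RCLike.real_smul_eq_coe_smul (K := 𝕜), inner_smul_left, norm_mul, RCLike.norm_conj,
    RCLike.norm_ofReal, abs_inv, abs_norm]
  rcases eq_or_ne r 0 with hr | hr
  · simp [hr]
  · calc ‖⟪r, x⟫_𝕜‖ = ‖r‖ * (‖r‖⁻¹ * ‖⟪r, x⟫_𝕜‖) := by field_simp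
      _ ≤ ‖y‖ * (‖r‖⁻¹ * ‖⟪r, x⟫_𝕜‖) := by
        gcongr
        exact norm_remainder_le hE k y

end Remainder

theorem norm_inv_norm_smul_le_one {H : Type*} [NormedAddCommGroup H] [NormedSpace ℝ H] (x : H) :
    ‖‖x‖⁻¹ • x‖ ≤ 1 := by
  rw [norm_smul, norm_inv, norm_norm]
  exact inv_mul_le_one_of_le₀ le_rfl (norm_nonneg x)

theorem mul_le_of_sq_mul_iSup_le {ι : Type*} {g : ι → ℝ} {ρ t : ℝ} (hρ : 0 ≤ ρ)
    (hg : ∀ q, 0 ≤ g q) (ht : 0 ≤ t) (hbdd : BddAbove (Set.range fun q => g q ^ 2))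
    (h : ρ ^ 2 * ⨆ q, g q ^ 2 ≤ t ^ 2) (q : ι) : ρ * g q ≤ t := by
  have hq := (mul_le_mul_of_nonneg_left (le_ciSup hbdd q) (sq_nonneg ρ)).trans h
  rw [← mul_pow] at hq
  exact (pow_le_pow_iff_left₀ (mul_nonneg hρ (hg q)) ht two_ne_zero).1 hq

theorem le_div_mul_sqrt_of_sq_mul_succ_le {x M ρ : ℝ} {n : ℕ} (hx : 0 ≤ x) (hM : 0 ≤ M)
    (hρ : 0 < ρ) (hn : 0 < n) (h : x ^ 2 * (n + 1) ≤ (M / ρ) ^ 2) : x ≤ M / (ρ * √n) := by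
  have hn' : (0 : ℝ) < n := Nat.cast_pos.2 hn
  rw [← div_div, le_div_iff₀ (Real.sqrt_pos.2 hn'),
    ← pow_le_pow_iff_left₀ (by positivity) (by positivity) two_ne_zero, mul_pow,
    Real.sq_sqrt hn'.le]
  nlinarith [sq_nonneg x]

theorem mul_add_two_le_of_sq_le_mul_sub {B x y m : ℝ} (hB : 0 < B) (hx : 0 ≤ x) (hm : 0 ≤ m)
    (hxm : x * (m + 1) ≤ B) (hxy : x ^ 2 ≤ B * (x - y)) : y * (m + 2) ≤ B := by
  have hxB : x ≤ B := by nlinarith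
  refine le_of_mul_le_mul_left ?_ hB
  -- `B² - (m + 2)(Bx - x²) = (B - (m + 1)x)(B - x) + x²`
  nlinarith [mul_nonneg (sub_nonneg.2 hxm) (sub_nonneg.2 hxB)]

theorem mul_succ_le_of_sq_le_mul_sub {a : ℕ → ℝ} {B : ℝ} (hB : 0 ≤ B) (ha : ∀ k, 0 ≤ a k)
    (h : ∀ k, a k ^ 2 ≤ B * (a k - a (k + 1))) (n : ℕ) : a n * (n + 1) ≤ B := by
  rcases hB.eq_or_lt with rfl | hB
  · have : a n ^ 2 ≤ 0 := by simpa using h n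
    simp [le_antisymm (by nlinarith) (ha n)]
  induction n with
  | zero =>
    rw [Nat.cast_zero, zero_add, mul_one]
    by_contra! hlt
    nlinarith [h 0, mul_nonneg hB.le (ha 1), mul_pos (hB.trans hlt) (sub_pos.2 hlt)]
  | succ k ih =>
    push_cast
    rw [add_assoc, one_add_one_eq_two]
    exact mul_add_two_le_of_sq_le_mul_sub hB (ha k) k.cast_nonneg ih (h k)

theorem norm_inner_le_of_hasSum {𝕜 H ι : Type*} [RCLike 𝕜] [NormedAddCommGroup H]
    [InnerProductSpace 𝕜 H] {c : ι → 𝕜} {u : ι → H} {f : H} (hf : HasSum (fun l => c l • u l) f)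
    (hc : Summable fun l => ‖c l‖) (v : H) {C : ℝ} (hC : ∀ l, ‖⟪v, u l⟫_𝕜‖ ≤ C) :
    ‖⟪v, f⟫_𝕜‖ ≤ (∑' l, ‖c l‖) * C := by
  refine ((innerSL 𝕜 v).hasSum hf).norm_le_of_bounded (hc.hasSum.mul_right C) fun l => ?_
  simp only [innerSL_apply_apply, inner_smul_right, norm_mul]
  gcongr
  exact hC l

theorem stmt14_general {H : Type*} [NormedAddCommGroup H] [InnerProductSpace ℂ H]
    {ι : Type*} (e : ι → H) (hunit : ∀ q, ‖e q‖ = 1)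
    (ρ : ℝ) (hρ : ρ ∈ Set.Ioc (0 : ℝ) 1)
    (f : H) (c : ℕ → ℂ) (qs : ℕ → ι)
    (hrep : HasSum (fun l => c l • e (qs l)) f)
    (M : ℝ) (hM : M = ∑' l, ‖c l‖) (hMfin : Summable fun l => ‖c l‖)
    (E : ℕ → H) (hON : Orthonormal ℂ E)
    (Ecand : ℕ → ι → H)
    (hEcand : ∀ k q, Ecand k q =
      ‖e q - ∑ i ∈ Finset.range k, (inner ℂ (E i) (e q) : ℂ) • E i‖⁻¹ •
        (e q - ∑ i ∈ Finset.range k, (inner ℂ (E i) (e q) : ℂ) • E i))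
    (hweak : ∀ k, ρ ^ 2 * (⨆ q, ‖(inner ℂ (Ecand k q) f : ℂ)‖ ^ 2)
      ≤ ‖(inner ℂ (E k) f : ℂ)‖ ^ 2)
    (n : ℕ) (hn : 0 < n) :
    ‖f - ∑ k ∈ Finset.range n, (inner ℂ (E k) f : ℂ) • E k‖ ≤ M / (ρ * Real.sqrt n) := by
  have hρ0 : 0 < ρ := hρ.1
  have hM0 : 0 ≤ M := hM ▸ tsum_nonneg fun l => norm_nonneg (c l)
  have hsel (k : ℕ) (q : ι) : ρ * ‖⟪Ecand k q, f⟫_ℂ‖ ≤ ‖⟪E k, f⟫_ℂ‖ := by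
    refine mul_le_of_sq_mul_iSup_le hρ0.le (fun _ => norm_nonneg _) (norm_nonneg _)
      ⟨‖f‖ ^ 2, Set.forall_mem_range.2 fun q => ?_⟩ (hweak k) q
    have hcand : ‖Ecand k q‖ ≤ 1 := hEcand k q ▸ norm_inv_norm_smul_le_one _
    gcongr
    exact (norm_inner_le_norm _ _).trans (mul_le_of_le_one_left (norm_nonneg f) hcand)
  have hdict (k : ℕ) (q : ι) : ρ * ‖⟪remainder ℂ E k f, e q⟫_ℂ‖ ≤ ‖⟪E k, f⟫_ℂ‖ := by
    refine le_trans (mul_le_mul_of_nonneg_left ?_ hρ0.le) (hsel k q)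
    calc _ ≤ ‖e q‖ * _ := norm_inner_remainder_le hON k f (e q)
      _ = _ := by rw [hunit, one_mul, hEcand]; rfl
  have hdecay (k : ℕ) : ‖remainder ℂ E k f‖ ^ 2 ≤ M / ρ * ‖⟪E k, f⟫_ℂ‖ := by
    rw [norm_sq_remainder hON, div_mul_comm, mul_comm, hM]
    exact norm_inner_le_of_hasSum hrep hMfin _ fun l => by
      rw [le_div_iff₀ hρ0, mul_comm]; exact hdict k (qs l)
  have hstep (k : ℕ) : (‖remainder ℂ E k f‖ ^ 2) ^ 2 ≤
      (M / ρ) ^ 2 * (‖remainder ℂ E k f‖ ^ 2 - ‖remainder ℂ E (k + 1) f‖ ^ 2) := by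
    rw [norm_sq_remainder_succ hON, sub_sub_cancel, ← mul_pow]
    exact pow_le_pow_left₀ (sq_nonneg _) (hdecay k) 2
  exact le_div_mul_sqrt_of_sq_mul_succ_le (norm_nonneg _) hM0 hρ0 hn
    (mul_succ_le_of_sq_le_mul_sub (sq_nonneg _) (fun k => sq_nonneg _) hstep n)

/-- Weak greedy convergence rate. If `f = ∑_l c_l e_{q_l}` with
`M = ∑ |c_l| < ∞`, and at each step `k` the parameter `sel k` is chosen so that
`|⟨f, E_k^{sel k}⟩|² ≥ ρ² sup_q |⟨f, E_k^q⟩|²`, where `E_k^q` is the Gram–Schmidt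
normalization of `e_q` against the previously selected `E_0,…,E_{k-1}`, then the `n`-th
remainder satisfies `‖f − ∑_{k<n} ⟨f,E_k⟩E_k‖ ≤ M/(ρ√n)`. -/
theorem stmt14 {H : Type*} [NormedAddCommGroup H] [InnerProductSpace ℂ H] [CompleteSpace H]
    {ι : Type*} (e : ι → H) (hunit : ∀ q, ‖e q‖ = 1)
    (hdense : Dense (Submodule.span ℂ (Set.range e) : Set H))
    (ρ : ℝ) (hρ : ρ ∈ Set.Ioc (0 : ℝ) 1)
    (f : H) (c : ℕ → ℂ) (qs : ℕ → ι)
    (hrep : HasSum (fun l => c l • e (qs l)) f)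
    (M : ℝ) (hM : M = ∑' l, ‖c l‖) (hMfin : Summable fun l => ‖c l‖)
    (sel : ℕ → ι) (E : ℕ → H) (hON : Orthonormal ℂ E)
    (Ecand : ℕ → ι → H)
    (hEcand : ∀ k q, Ecand k q =
      ‖e q - ∑ i ∈ Finset.range k, (inner ℂ (E i) (e q) : ℂ) • E i‖⁻¹ •
        (e q - ∑ i ∈ Finset.range k, (inner ℂ (E i) (e q) : ℂ) • E i))
    (hE : ∀ k, E k = Ecand k (sel k))
    (hweak : ∀ k, ρ ^ 2 * (⨆ q, ‖(inner ℂ (Ecand k q) f : ℂ)‖ ^ 2)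
      ≤ ‖(inner ℂ (E k) f : ℂ)‖ ^ 2)
    (n : ℕ) (hn : 0 < n) :
    ‖f - ∑ k ∈ Finset.range n, (inner ℂ (E k) f : ℂ) • E k‖ ≤ M / (ρ * Real.sqrt n) :=
  stmt14_general e hunit ρ hρ f c qs hrep M hM hMfin E hON Ecand hEcand hweak n hn
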